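/- arXiv:1605.01473 — 2 statements merged into one kernel-verified Lean document; each statement's English description precedes it below -/
import Mathlib

section
/- Let m, n, p be positive integers, let l : Fin m → Fin p be a map, let v ∈ ℂ^m, and let V be an m×n complex matrix. For r ∈ ℂ^p, let D_r denote the m×m diagonal matrix whose t-th diagonal entry is r(l(t)). If v does not lie in the column span of V, then the set {r ∈ ℂ^p : D_r v lies in the column span of V} has Lebesgue measure zero in ℂ^p. -/
/-!
The map `r ↦ D_r v` is `ℂ`-linear, so the set of `r` with `D_r v ∈ colSpan V` is a complex
subspace of `ℂ^p`. It is proper because `D_1 v = v ∉ colSpan V`, and a proper subspace is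
Lebesgue-null.
-/

open Matrix MeasureTheory

/-- The column span of an `m × n` complex matrix: the range of `x ↦ M x`. -/
noncomputable def colSpan {m n : ℕ} (M : Matrix (Fin m) (Fin n) ℂ) :
    Submodule ℂ (Fin m → ℂ) :=
  LinearMap.range M.mulVecLin

/-- The `m × m` diagonal matrix whose `t`-th diagonal entry is `r (l t)`. -/
def patDiag {m p : ℕ} (l : Fin m → Fin p) (r : Fin p → ℂ) :
    Matrix (Fin m) (Fin m) ℂ :=
  Matrix.diagonal (r ∘ l)

theorem Submodule.addHaar_eq_zero_of_ne_top_complex {E : Type*} [NormedAddCommGroup E]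
    [NormedSpace ℂ E] [MeasurableSpace E] [BorelSpace E] [FiniteDimensional ℝ E]
    (μ : Measure E) [μ.IsAddHaarMeasure] {S : Submodule ℂ E} (hS : S ≠ ⊤) : μ S = 0 :=
  Measure.addHaar_submodule μ (S.restrictScalars ℝ) (by rwa [Ne, restrictScalars_eq_top_iff])

theorem patDiag_mulVec {m p : ℕ} (l : Fin m → Fin p) (r : Fin p → ℂ) (v : Fin m → ℂ) :
    (patDiag l r).mulVec v = (r ∘ l) * v :=
  funext (mulVec_diagonal _ _)

noncomputable def patDiagMulVecLin {m p : ℕ} (l : Fin m → Fin p) (v : Fin m → ℂ) :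
    (Fin p → ℂ) →ₗ[ℂ] (Fin m → ℂ) :=
  LinearMap.mulRight ℂ v ∘ₗ LinearMap.funLeft ℂ ℂ l

theorem patDiagMulVecLin_apply {m p : ℕ} (l : Fin m → Fin p) (v : Fin m → ℂ) (r : Fin p → ℂ) :
    patDiagMulVecLin l v r = (patDiag l r).mulVec v := by
  rw [patDiag_mulVec]
  rfl

theorem patDiagMulVecLin_one {m p : ℕ} (l : Fin m → Fin p) (v : Fin m → ℂ) :
    patDiagMulVecLin l v 1 = v := by
  rw [patDiagMulVecLin_apply, patDiag_mulVec, Pi.one_comp, one_mul]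

theorem stmt6_general (m n p : ℕ)
    (l : Fin m → Fin p) (v : Fin m → ℂ) (V : Matrix (Fin m) (Fin n) ℂ)
    (hv : v ∉ colSpan V) :
    volume {r : Fin p → ℂ | (patDiag l r).mulVec v ∈ colSpan V} = 0 := by
  set S := (colSpan V).comap (patDiagMulVecLin l v)
  have hset : {r : Fin p → ℂ | (patDiag l r).mulVec v ∈ colSpan V} = S := by
    ext r
    simp [S, patDiagMulVecLin_apply]
  have hS : S ≠ ⊤ := fun h ↦ hv <| by
    simpa [S, patDiagMulVecLin_one] using (h ▸ Submodule.mem_top : (1 : Fin p → ℂ) ∈ S)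
  rw [hset]
  exact S.addHaar_eq_zero_of_ne_top_complex volume hS

theorem stmt6 (m n p : ℕ) (hm : 0 < m) (hn : 0 < n) (hp : 0 < p)
    (l : Fin m → Fin p) (v : Fin m → ℂ) (V : Matrix (Fin m) (Fin n) ℂ)
    (hv : v ∉ colSpan V) :
    volume {r : Fin p → ℂ | (patDiag l r).mulVec v ∈ colSpan V} = 0 :=
  stmt6_general m n p l v V hv
end

section
/- Let m, n₁, n₂, p be positive integers, let l : Fin m → Fin p be a map, and let V₁ and V₂ be m×n₁ and m×n₂ complex matrices. For r ∈ ℂ^p, let D_r denote the m×m diagonal matrix whose t-th diagonal entry is r(l(t)). Then for almost every (r, s) ∈ ℂ^p × ℂ^p, the dimension of the intersection of the column span of D_r V₁ with the column span of D_s V₂ is at most the dimension of the intersection of the column span of V₁ with the column span of V₂. -/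
/-!
By Grassmann's formula, `dim (col (D_r V₁) ⊓ col (D_s V₂))` equals
`rank (D_r V₁) + rank (D_s V₂) - rank [D_r V₁ | D_s V₂]`. Multiplying by a diagonal matrix cannot
raise the first two ranks, so it suffices that `rank [D_r V₁ | D_s V₂]` is generically at least
its value `rank [V₁ | V₂]` at `r = s = 1`. The entries of `[D_r V₁ | D_s V₂]` are polynomials in
`(r, s)`, so a maximal minor that is nonzero at `(1, 1)` is a nonzero polynomial, and the zero set
of a nonzero polynomial on `ℂⁿ` is Lebesgue-null.
-/

open Matrix MeasureTheory Module

open MvPolynomial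

namespace MvPolynomial

theorem ae_eval_ne_zero_of_fin : ∀ {n : ℕ} {q : MvPolynomial (Fin n) ℂ}, q ≠ 0 →
    ∀ᵐ x : Fin n → ℂ, eval x q ≠ 0
  | 0, q, hq => Filter.Eventually.of_forall fun x hx =>
      hq <| MvPolynomial.funext fun y => by rw [Subsingleton.elim y x, hx, map_zero]
  | n + 1, q, hq => by
    set F := finSuccEquiv ℂ n q
    have hlead : F.leadingCoeff ≠ 0 :=
      Polynomial.leadingCoeff_ne_zero.2 (EmbeddingLike.map_ne_zero_iff.2 hq)
    have hmeas : MeasurableSet {z : ℂ × (Fin n → ℂ) | eval (Fin.cons z.1 z.2) q ≠ 0} :=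
      (isOpen_ne_fun ((continuous_eval q).comp (continuous_fst.finCons continuous_snd))
        continuous_const).measurableSet
    -- For a.e. `s` the leading coefficient of `q` in the first variable `y` survives at `s`,
    -- and then only finitely many `y` are roots.
    have hprod : ∀ᵐ z : ℂ × (Fin n → ℂ), eval (Fin.cons z.1 z.2) q ≠ 0 := by
      refine (Measure.ae_prod_iff_ae_ae hmeas).2 ((Measure.ae_ae_comm hmeas).2 ?_)
      filter_upwards [ae_eval_ne_zero_of_fin hlead] with s hs
      have hFs : Polynomial.map (eval s) F ≠ 0 := fun h => hs <| by
        rw [Polynomial.leadingCoeff, ← Polynomial.coeff_map, h, Polynomial.coeff_zero]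
      filter_upwards [measure_eq_zero_iff_ae_notMem.1
        ((Polynomial.finite_setOfPred_isRoot hFs).measure_zero volume)] with y hy
      rwa [eval_eq_eval_mv_eval']
    filter_upwards [(volume_preserving_piFinSuccAbove (fun _ => ℂ) 0).quasiMeasurePreserving.ae
      hprod] with x hx
    simpa using hx

theorem ae_eval_ne_zero {σ : Type*} [Fintype σ] {q : MvPolynomial σ ℂ} (hq : q ≠ 0) :
    ∀ᵐ x : σ → ℂ, eval x q ≠ 0 := by
  set e := Fintype.equivFin σ
  have hq' : rename e q ≠ 0 := (rename_injective e e.injective).ne_iff' (map_zero _) |>.2 hq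
  filter_upwards [(volume_measurePreserving_piCongrLeft (fun _ => ℂ) e)
    |>.quasiMeasurePreserving.ae (ae_eval_ne_zero_of_fin hq')] with x hx
  have hcomp : MeasurableEquiv.piCongrLeft (fun _ => ℂ) e x ∘ e = x :=
    _root_.funext fun i => MeasurableEquiv.piCongrLeft_apply_apply e (β := fun _ => ℂ) x i
  rwa [eval_rename, hcomp] at hx

end MvPolynomial

namespace Matrix

variable {K : Type*} [Field K] {m n : Type*}

theorem exists_linearIndependent_rows [Finite m] [Fintype n] (A : Matrix m n K) :
    ∃ r : Fin A.rank → m, LinearIndependent K (A.row ∘ r) := by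
  obtain ⟨f, hf_mem, -, hf⟩ := Submodule.exists_fun_fin_finrank_span_eq K (Set.range A.row)
  choose r hr using hf_mem
  rw [rank_eq_finrank_span_row]
  exact ⟨r, (funext hr : A.row ∘ r = f) ▸ hf⟩

theorem exists_submatrix_det_ne_zero [Fintype m] [Fintype n] (A : Matrix m n K) :
    ∃ (r : Fin A.rank → m) (c : Fin A.rank → n), (A.submatrix r c).det ≠ 0 := by
  obtain ⟨r, hr⟩ := A.exists_linearIndependent_rows
  have hB : (A.submatrix r id)ᵀ.rank = A.rank := by
    rw [rank_transpose, LinearIndependent.rank_matrix (M := A.submatrix r id) hr,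
      Fintype.card_fin]
  obtain ⟨c, hc⟩ := (A.submatrix r id)ᵀ.exists_linearIndependent_rows
  have hunit : IsUnit (A.submatrix r (c ∘ Fin.cast hB.symm))ᵀ :=
    linearIndependent_rows_iff_isUnit.1 (hc.comp _ (Fin.cast_injective _))
  exact ⟨r, c ∘ Fin.cast hB.symm,
    ((isUnit_iff_isUnit_det _).1 ((isUnit_transpose _).1 hunit)).ne_zero⟩

theorem le_rank_of_submatrix_det_ne_zero [Fintype n] {k : ℕ} {A : Matrix m n K}
    {r : Fin k → m} {c : Fin k → n} (h : (A.submatrix r c).det ≠ 0) : k ≤ A.rank := by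
  simpa using (rank_of_det_ne_zero h).symm.trans_le (A.rank_submatrix_le r c)

theorem ae_rank_map_eval_le {σ : Type*} [Fintype σ] [Fintype m] [Fintype n]
    (W : Matrix m n (MvPolynomial σ ℂ)) (x₀ : σ → ℂ) :
    ∀ᵐ x : σ → ℂ, (W.map (eval x₀)).rank ≤ (W.map (eval x)).rank := by
  obtain ⟨r, c, hrc⟩ := (W.map (eval x₀)).exists_submatrix_det_ne_zero
  have heval : ∀ x, eval x (W.submatrix r c).det = ((W.map (eval x)).submatrix r c).det :=
    fun x => RingHom.map_det _ _
  have hP : (W.submatrix r c).det ≠ 0 := fun h => hrc (by rw [← heval, h, map_zero])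
  filter_upwards [ae_eval_ne_zero hP] with x hx
  exact le_rank_of_submatrix_det_ne_zero (heval x ▸ hx)

end Matrix

section colSpan

variable {m n₁ n₂ : ℕ}

theorem colSpan_sup_colSpan_eq_range_fromCols (A : Matrix (Fin m) (Fin n₁) ℂ) (B : Matrix (Fin m) (Fin n₂) ℂ) :
    colSpan A ⊔ colSpan B = LinearMap.range (fromCols A B).mulVecLin := by
  have : (fromCols A B).mulVecLin = A.mulVecLin.coprod B.mulVecLin ∘ₗ
      (LinearEquiv.sumArrowLequivProdArrow _ _ ℂ ℂ).toLinearMap := by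
    refine LinearMap.ext fun v => ?_
    simp only [mulVecBilin_apply, fromCols_mulVec, LinearMap.coe_comp, LinearEquiv.coe_coe,
      Function.comp_apply, LinearMap.coprod_apply]
    rfl
  rw [this, LinearMap.range_comp_of_range_eq_top _ (LinearEquiv.range _),
    LinearMap.range_coprod]
  rfl

theorem finrank_colSpan_inf_add_rank_fromCols (A : Matrix (Fin m) (Fin n₁) ℂ)
    (B : Matrix (Fin m) (Fin n₂) ℂ) :
    finrank ℂ ↥(colSpan A ⊓ colSpan B) + (fromCols A B).rank = A.rank + B.rank := by
  rw [add_comm, Matrix.rank, ← colSpan_sup_colSpan_eq_range_fromCols]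
  exact Submodule.finrank_sup_add_finrank_inf_eq _ _

end colSpan

section patDiag

variable {m n₁ n₂ p : ℕ}

theorem patDiag_one (l : Fin m → Fin p) : patDiag l 1 = 1 := by
  rw [patDiag, Pi.one_comp]
  exact diagonal_one

noncomputable def patScaledColsPoly (l : Fin m → Fin p) (V₁ : Matrix (Fin m) (Fin n₁) ℂ)
    (V₂ : Matrix (Fin m) (Fin n₂) ℂ) :
    Matrix (Fin m) (Fin n₁ ⊕ Fin n₂) (MvPolynomial (Fin p ⊕ Fin p) ℂ) :=
  fromCols (of fun t j => X (Sum.inl (l t)) * C (V₁ t j))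
    (of fun t j => X (Sum.inr (l t)) * C (V₂ t j))

theorem patScaledColsPoly_map_eval (l : Fin m → Fin p) (V₁ : Matrix (Fin m) (Fin n₁) ℂ)
    (V₂ : Matrix (Fin m) (Fin n₂) ℂ) (r s : Fin p → ℂ) :
    (patScaledColsPoly l V₁ V₂).map (eval (Sum.elim r s)) =
      fromCols (patDiag l r * V₁) (patDiag l s * V₂) := by
  ext t (j | j) <;> simp [patScaledColsPoly, patDiag, diagonal_mul]

end patDiag

theorem stmt8_general (m n₁ n₂ p : ℕ)
    (l : Fin m → Fin p)
    (V₁ : Matrix (Fin m) (Fin n₁) ℂ) (V₂ : Matrix (Fin m) (Fin n₂) ℂ) :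
    ∀ᵐ rs : (Fin p → ℂ) × (Fin p → ℂ),
      finrank ℂ ↥(colSpan (patDiag l rs.1 * V₁) ⊓ colSpan (patDiag l rs.2 * V₂)) ≤
        finrank ℂ ↥(colSpan V₁ ⊓ colSpan V₂) := by
  have hgeneric := (patScaledColsPoly l V₁ V₂).ae_rank_map_eval_le (Sum.elim 1 1)
  filter_upwards [(volume_measurePreserving_sumPiEquivProdPi_symm fun _ => ℂ)
    |>.quasiMeasurePreserving.ae hgeneric] with ⟨r, s⟩ hrank
  dsimp only
  change _ ≤ ((patScaledColsPoly l V₁ V₂).map (eval (Sum.elim r s))).rank at hrank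
  rw [patScaledColsPoly_map_eval, patScaledColsPoly_map_eval, patDiag_one, Matrix.one_mul,
    Matrix.one_mul] at hrank
  have hV := finrank_colSpan_inf_add_rank_fromCols V₁ V₂
  have hDV := finrank_colSpan_inf_add_rank_fromCols (patDiag l r * V₁) (patDiag l s * V₂)
  have h₁ := rank_mul_le_right (patDiag l r) V₁
  have h₂ := rank_mul_le_right (patDiag l s) V₂
  omega

theorem stmt8 (m n₁ n₂ p : ℕ) (hm : 0 < m) (hn₁ : 0 < n₁) (hn₂ : 0 < n₂) (hp : 0 < p)
    (l : Fin m → Fin p)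
    (V₁ : Matrix (Fin m) (Fin n₁) ℂ) (V₂ : Matrix (Fin m) (Fin n₂) ℂ) :
    ∀ᵐ rs : (Fin p → ℂ) × (Fin p → ℂ),
      finrank ℂ ↥(colSpan (patDiag l rs.1 * V₁) ⊓ colSpan (patDiag l rs.2 * V₂)) ≤
        finrank ℂ ↥(colSpan V₁ ⊓ colSpan V₂) :=
  stmt8_general m n₁ n₂ p l V₁ V₂
end
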